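/- Let ‖·‖_u be a unitarily invariant matrix norm and consider minimal TT factorizations of a tensor A ∈ ℝ^{n₁×⋯×n_d}: a left-orthogonal one {U_s}_{s=1}^d, a right-orthogonal one {V_s}_{s=1}^d, and a t-orthogonal one {T_s}_{s=1}^d for some t ∈ [d]. Then μ_{u,<}(T_s) = μ_{u,<}(U_s) for s = 1,…,min{t, d−1}, and μ_{u,>}(T_s) = μ_{u,>}(V_s) for s = max{2, t},…,d. -/

import Mathlib

open scoped BigOperators
open Matrix

namespace TT

/-- Evaluation of a tensor-train factorization: `A(i₁,…,i_d) = Σ_α Π_s G_s(α_{s-1}, i_s, α_s)`. -/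
noncomputable def ttEval {d : ℕ} (n : Fin d → ℕ) (ρ : Fin (d + 1) → ℕ)
    (G : ∀ s : Fin d, Fin (ρ s.castSucc) → Fin (n s) → Fin (ρ s.succ) → ℝ) :
    (∀ s : Fin d, Fin (n s)) → ℝ := fun i =>
  ∑ α : ∀ s : Fin (d + 1), Fin (ρ s), ∏ s : Fin d, G s (α s.castSucc) (i s) (α s.succ)

/-- Left unfolding `G^< ∈ ℝ^{np×q}` of a third-order tensor `G ∈ ℝ^{p×n×q}`
(the row index `(i,a)` corresponds to the paper's `a + (i−1)p`). -/
def leftUnf {p n q : ℕ} (G : Fin p → Fin n → Fin q → ℝ) :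
    Matrix (Fin n × Fin p) (Fin q) ℝ := fun x c => G x.2 x.1 c

/-- Right unfolding `G^> ∈ ℝ^{p×nq}` of a third-order tensor `G ∈ ℝ^{p×n×q}`. -/
def rightUnf {p n q : ℕ} (G : Fin p → Fin n → Fin q → ℝ) :
    Matrix (Fin p) (Fin n × Fin q) ℝ := fun a x => G a x.1 x.2

/-- A third-order tensor is left-orthogonal if its left unfolding has orthonormal columns. -/
def LeftOrth {p n q : ℕ} (G : Fin p → Fin n → Fin q → ℝ) : Prop :=
  (leftUnf G)ᵀ * leftUnf G = 1

/-- A third-order tensor is right-orthogonal if its right unfolding has orthonormal rows. -/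
def RightOrth {p n q : ℕ} (G : Fin p → Fin n → Fin q → ℝ) : Prop :=
  rightUnf G * (rightUnf G)ᵀ = 1

/-- A TT factorization is minimal if the left and right unfoldings of all cores are
full-rank. -/
def MinimalTT {d : ℕ} {n : Fin d → ℕ} {ρ : Fin (d + 1) → ℕ}
    (G : ∀ s : Fin d, Fin (ρ s.castSucc) → Fin (n s) → Fin (ρ s.succ) → ℝ) : Prop :=
  ∀ s : Fin d, (leftUnf (G s)).rank = ρ s.succ ∧ (rightUnf (G s)).rank = ρ s.castSucc

/-- A TT factorization is `t`-orthogonal (`t ∈ [d]`, 1-based) if the cores `1,…,t−1` are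
left-orthogonal and the cores `t+1,…,d` are right-orthogonal. -/
def TOrth {d : ℕ} {n : Fin d → ℕ} {ρ : Fin (d + 1) → ℕ} (t : ℕ)
    (G : ∀ s : Fin d, Fin (ρ s.castSucc) → Fin (n s) → Fin (ρ s.succ) → ℝ) : Prop :=
  (∀ s : Fin d, s.val + 1 < t → LeftOrth (G s)) ∧
  (∀ s : Fin d, t < s.val + 1 → RightOrth (G s))

/-- Column space of a matrix. -/
def colSpace {γ δ : Type} [Fintype δ] [DecidableEq δ] (M : Matrix γ δ ℝ) :
    Submodule ℝ (γ → ℝ) := LinearMap.range M.mulVecLin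

/-- Row space of a matrix. -/
def rowSpace {γ δ : Type} [Fintype γ] [DecidableEq γ] (M : Matrix γ δ ℝ) :
    Submodule ℝ (δ → ℝ) := colSpace Mᵀ

/-- `‖G‖_{u,∞} = max_i ‖G(:,i,:)‖_u` for a third-order tensor `G ∈ ℝ^{p×n×q}`. -/
noncomputable def sliceNormInf (ν : ∀ p q : ℕ, Matrix (Fin p) (Fin q) ℝ → ℝ)
    {p n q : ℕ} (G : Fin p → Fin n → Fin q → ℝ) : ℝ :=
  ⨆ i : Fin n, ν p q (fun a b => G a i b)

/-- The `p`-block coherence `μ_{u,p}(M)` of a subspace `M ⊆ ℝ^{np}` with respect to a matrix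
norm `‖·‖_u`, defined through any matrix `Q` whose columns form an orthonormal basis of `M`
(the value is independent of the choice of `Q` for a unitarily invariant norm). -/
noncomputable def blockCoh (ν : ∀ p q : ℕ, Matrix (Fin p) (Fin q) ℝ → ℝ) (p n : ℕ)
    (M : Submodule ℝ ((Fin n × Fin p) → ℝ)) : ℝ :=
  sSup { y | ∃ (q : ℕ) (Q : Matrix (Fin n × Fin p) (Fin q) ℝ),
    Qᵀ * Q = 1 ∧ colSpace Q = M ∧
    y = ((n * p : ℝ) / q) * ⨆ i : Fin n, (ν q p (fun α j => Q (i, j) α)) ^ 2 }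

/-- Left coherence `μ_{u,<}(G) = μ_{u,p}(col(G^<))` of a third-order tensor `G ∈ ℝ^{p×n×q}`. -/
noncomputable def muLeft (ν : ∀ p q : ℕ, Matrix (Fin p) (Fin q) ℝ → ℝ)
    {p n q : ℕ} (G : Fin p → Fin n → Fin q → ℝ) : ℝ :=
  blockCoh ν p n (colSpace (leftUnf G))

/-- Right coherence `μ_{u,>}(G) = μ_{u,q}(row(G^>))` of a third-order tensor `G ∈ ℝ^{p×n×q}`. -/
noncomputable def muRight (ν : ∀ p q : ℕ, Matrix (Fin p) (Fin q) ℝ → ℝ)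
    {p n q : ℕ} (G : Fin p → Fin n → Fin q → ℝ) : ℝ :=
  blockCoh ν q n (rowSpace (rightUnf G))

end TT

/-!
Let `L_k(G)` be the matrix of left partial contractions of a TT factorization `G` up to the
interface `k`, and `R_k(G)` that of right partial contractions from `k` on, so that
`L_k R_kᵀ` is the `k`-th unfolding of the tensor, `L_{s+1} = (L_s ⊗ I) G_s^<` and
`R_s = (R_{s+1} ⊗ I) (G_s^>)ᵀ`. Minimality makes every `L_k` and `R_k` injective, hence two
minimal factorizations `T`, `U` of the same tensor are related by gauges
`L_k(T) = L_k(U) Q_k`, and cancelling `L_s(U) ⊗ I` gives `(I ⊗ Q_s) T_s^< = U_s^< Q_{s+1}`.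
If the cores before `s` are left-orthogonal in both factorizations, this identity shows
inductively that `Q_0 = 1, Q_1, …, Q_s` are orthogonal. Then `col(T_s^<)` is the image of
`col(U_s^<)` under the block-diagonal orthogonal matrix `I ⊗ Q_sᵀ`, and a unitarily invariant
norm does not see such a change of orthonormal basis inside each block. Right coherences are
handled in the same way with the gauges of the `R_k`.
-/

open Function
open scoped Kronecker

namespace Matrix

variable {ι κ γ l : Type*}

theorem mul_left_cancel_of_mulVec_injective [Fintype γ] [Fintype l] [DecidableEq l]
    {M : Matrix ι γ ℝ} (hM : Injective M.mulVec) {B C : Matrix γ l ℝ} (h : M * B = M * C) :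
    B = C :=
  ext_of_mulVec_single fun j => hM <| by rw [mulVec_mulVec, h, ← mulVec_mulVec]

theorem mulVec_injective_mul [Fintype κ] [Fintype γ] {A : Matrix ι κ ℝ} {B : Matrix κ γ ℝ}
    (hA : Injective A.mulVec) (hB : Injective B.mulVec) : Injective (A * B).mulVec :=
  fun v w h => hB (hA (by simpa only [mulVec_mulVec] using h))

theorem mulVec_injective_of_rank_eq [Fintype γ] {M : Matrix ι γ ℝ}
    (h : M.rank = Fintype.card γ) : Injective M.mulVec := by
  have := LinearMap.finrank_range_add_finrank_ker M.mulVecLin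
  rw [← Matrix.rank, h, Module.finrank_fintype_fun_eq_card, Nat.add_eq_left,
    Submodule.finrank_eq_zero, LinearMap.ker_eq_bot] at this
  exact this

theorem ones_mulVec_injective [Fintype γ] [Nonempty ι] [Subsingleton γ] :
    Injective (of fun (_ : ι) (_ : γ) => (1 : ℝ)).mulVec := by
  intro v w h
  funext c
  have := congrFun h (Classical.arbitrary ι)
  simpa [mulVec, dotProduct, Fintype.sum_subsingleton _ c] using this

theorem exists_mul_eq_one_of_mulVec_injective [Fintype ι] [DecidableEq ι] [Fintype γ]
    [DecidableEq γ] {M : Matrix ι γ ℝ} (hM : Injective M.mulVec) :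
    ∃ B : Matrix γ ι ℝ, B * M = 1 := by
  obtain ⟨g, hg⟩ := M.mulVecLin.exists_leftInverse_of_injective (LinearMap.ker_eq_bot.2 hM)
  refine ⟨LinearMap.toMatrix' g, ?_⟩
  have := congrArg LinearMap.toMatrix' hg
  rwa [LinearMap.toMatrix'_comp, LinearMap.toMatrix'_id, ← toLin'_apply',
    LinearMap.toMatrix'_toLin'] at this

theorem exists_eq_mul_of_mul_transpose_eq [Fintype κ] [DecidableEq κ] [Fintype γ]
    [DecidableEq γ] {L L' : Matrix ι γ ℝ} {R R' : Matrix κ γ ℝ} (h : L * Rᵀ = L' * R'ᵀ)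
    (hR : Injective R.mulVec) : ∃ Q : Matrix γ γ ℝ, L = L' * Q := by
  obtain ⟨B, hB⟩ := exists_mul_eq_one_of_mulVec_injective hR
  refine ⟨R'ᵀ * Bᵀ, ?_⟩
  rw [← Matrix.mul_assoc, ← h, Matrix.mul_assoc, ← transpose_mul, hB, transpose_one,
    Matrix.mul_one]

theorem mulVec_surjective_of_mul [Fintype γ] [DecidableEq γ] {A : Matrix ι γ ℝ}
    {Q : Matrix γ γ ℝ} (h : Injective (A * Q).mulVec) : Surjective Q.mulVec :=
  mulVec_surjective_iff_isUnit.2 <| mulVec_injective_iff_isUnit.1 fun v w hvw =>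
    h (by simp only [← mulVec_mulVec, hvw])

theorem transpose_mul_self_eq_one_of_kronecker_mul_eq [Fintype κ] [DecidableEq κ] [Fintype γ]
    [DecidableEq γ] [Fintype l] [DecidableEq l] {X Y : Matrix (κ × γ) l ℝ} {Q : Matrix γ γ ℝ}
    {Q' : Matrix l l ℝ} (h : ((1 : Matrix κ κ ℝ) ⊗ₖ Q) * X = Y * Q') (hQ : Qᵀ * Q = 1)
    (hX : Xᵀ * X = 1) (hY : Yᵀ * Y = 1) : Q'ᵀ * Q' = 1 :=
  calc Q'ᵀ * Q' = (Y * Q')ᵀ * (Y * Q') := by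
        rw [transpose_mul, Matrix.mul_assoc, ← Matrix.mul_assoc Yᵀ, hY, Matrix.one_mul]
    _ = 1 := by
        rw [← h, transpose_mul, ← kroneckerMap_transpose, transpose_one, Matrix.mul_assoc,
          ← Matrix.mul_assoc _ ((1 : Matrix κ κ ℝ) ⊗ₖ Q), ← mul_kronecker_mul, Matrix.one_mul,
          hQ, one_kronecker_one, Matrix.one_mul, hX]

end Matrix

namespace TT

def UnitarilyInvariant (ν : ∀ p q : ℕ, Matrix (Fin p) (Fin q) ℝ → ℝ) : Prop :=
  ∀ p q (A : Matrix (Fin p) (Fin q) ℝ) (P : Matrix (Fin p) (Fin p) ℝ)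
    (Q : Matrix (Fin q) (Fin q) ℝ),
    Pᵀ * P = 1 → P * Pᵀ = 1 → Qᵀ * Q = 1 → Q * Qᵀ = 1 → ν p q (P * A * Q) = ν p q A

section BlockCoherence

theorem colSpace_mul {γ γ' δ : Type} [Fintype γ'] [DecidableEq γ'] [Fintype δ] [DecidableEq δ]
    (B : Matrix γ γ' ℝ) (Q : Matrix γ' δ ℝ) :
    colSpace (B * Q) = (colSpace Q).map B.mulVecLin := by
  rw [colSpace, colSpace, mulVecLin_mul, LinearMap.range_comp]

theorem colSpace_mul_of_surjective {γ δ : Type} [Fintype δ] [DecidableEq δ]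
    (M : Matrix γ δ ℝ) {C : Matrix δ δ ℝ} (hC : Surjective C.mulVec) :
    colSpace (M * C) = colSpace M := by
  rw [colSpace, colSpace, mulVecLin_mul, LinearMap.range_comp,
    LinearMap.range_eq_top.mpr hC, Submodule.map_top]

def blockCohValues (ν : ∀ p q : ℕ, Matrix (Fin p) (Fin q) ℝ → ℝ) (p n : ℕ)
    (M : Submodule ℝ ((Fin n × Fin p) → ℝ)) : Set ℝ :=
  { y | ∃ (q : ℕ) (Q : Matrix (Fin n × Fin p) (Fin q) ℝ),
    Qᵀ * Q = 1 ∧ colSpace Q = M ∧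
    y = ((n * p : ℝ) / q) * ⨆ i : Fin n, (ν q p (fun α j => Q (i, j) α)) ^ 2 }

variable {ν : ∀ p q : ℕ, Matrix (Fin p) (Fin q) ℝ → ℝ} {n p : ℕ}

theorem slice_kronecker_mul {q : ℕ} (R : Matrix (Fin p) (Fin p) ℝ)
    (Q : Matrix (Fin n × Fin p) (Fin q) ℝ) (i : Fin n) :
    (of fun α j => (((1 : Matrix (Fin n) (Fin n) ℝ) ⊗ₖ R) * Q) (i, j) α) =
      (of fun α j => Q (i, j) α) * Rᵀ := by
  ext α j
  simp [mul_apply, Fintype.sum_prod_type, one_apply, ite_mul]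
  exact Finset.sum_congr rfl fun _ _ => mul_comm _ _

theorem blockCohValues_subset_map (hν : UnitarilyInvariant ν) {R : Matrix (Fin p) (Fin p) ℝ}
    (hR : Rᵀ * R = 1) (M : Submodule ℝ ((Fin n × Fin p) → ℝ)) :
    blockCohValues ν p n M ⊆
      blockCohValues ν p n (M.map ((1 : Matrix (Fin n) (Fin n) ℝ) ⊗ₖ R).mulVecLin) := by
  rintro _ ⟨q, Q, hQ, rfl, rfl⟩
  have hR' : R * Rᵀ = 1 := mul_eq_one_comm.mp hR
  refine ⟨q, ((1 : Matrix (Fin n) (Fin n) ℝ) ⊗ₖ R) * Q, ?_, colSpace_mul _ _, ?_⟩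
  · rw [transpose_mul, ← kroneckerMap_transpose, transpose_one, Matrix.mul_assoc,
      ← Matrix.mul_assoc _ (1 ⊗ₖ R), ← mul_kronecker_mul, Matrix.mul_one, hR, one_kronecker_one,
      Matrix.one_mul, hQ]
  · congr 2 with i
    have := hν q p (of fun α j => Q (i, j) α) 1 Rᵀ (by simp) (by simp)
      (by rwa [transpose_transpose]) (by rwa [transpose_transpose])
    rw [Matrix.one_mul] at this
    exact congrArg (· ^ 2) (this.symm.trans (congrArg (ν q p) (slice_kronecker_mul R Q i).symm))

theorem blockCoh_map_kronecker (hν : UnitarilyInvariant ν) {R : Matrix (Fin p) (Fin p) ℝ}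
    (hR : Rᵀ * R = 1) (M : Submodule ℝ ((Fin n × Fin p) → ℝ)) :
    blockCoh ν p n (M.map ((1 : Matrix (Fin n) (Fin n) ℝ) ⊗ₖ R).mulVecLin) = blockCoh ν p n M := by
  have hRt : Rᵀᵀ * Rᵀ = 1 := by rw [transpose_transpose]; exact mul_eq_one_comm.mp hR
  have hback : (M.map ((1 : Matrix (Fin n) (Fin n) ℝ) ⊗ₖ R).mulVecLin).map
      ((1 : Matrix (Fin n) (Fin n) ℝ) ⊗ₖ Rᵀ).mulVecLin = M := by
    rw [← Submodule.map_comp, ← mulVecLin_mul, ← mul_kronecker_mul, Matrix.mul_one, hR,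
      one_kronecker_one, mulVecLin_one, Submodule.map_id]
  show sSup (blockCohValues ν p n _) = sSup (blockCohValues ν p n M)
  refine congrArg sSup (Set.Subset.antisymm ?_ (blockCohValues_subset_map hν hR M))
  simpa only [hback] using blockCohValues_subset_map hν hRt
    (M.map ((1 : Matrix (Fin n) (Fin n) ℝ) ⊗ₖ R).mulVecLin)

theorem blockCoh_colSpace_eq_of_kronecker_mul_eq (hν : UnitarilyInvariant ν) {q : ℕ}
    {X Y : Matrix (Fin n × Fin p) (Fin q) ℝ} {Q : Matrix (Fin p) (Fin p) ℝ}
    {Q' : Matrix (Fin q) (Fin q) ℝ} (h : ((1 : Matrix (Fin n) (Fin n) ℝ) ⊗ₖ Q) * X = Y * Q')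
    (hQ : Qᵀ * Q = 1) (hQ' : Surjective Q'.mulVec) :
    blockCoh ν p n (colSpace X) = blockCoh ν p n (colSpace Y) := by
  have hX : X = ((1 : Matrix (Fin n) (Fin n) ℝ) ⊗ₖ Qᵀ) * (Y * Q') := by
    rw [← h, ← Matrix.mul_assoc, ← mul_kronecker_mul, Matrix.one_mul, hQ, one_kronecker_one,
      Matrix.one_mul]
  have hQt : Qᵀᵀ * Qᵀ = 1 := by rw [transpose_transpose]; exact mul_eq_one_comm.mp hQ
  rw [hX, colSpace_mul, colSpace_mul_of_surjective _ hQ', blockCoh_map_kronecker hν hQt]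

end BlockCoherence

section SpreadAt

variable {ι : Type*} {β : ι → Type*} [∀ j, Fintype (β j)] [∀ j, DecidableEq (β j)]
  {γ γ' : Type*} [Fintype γ]

/-- The matrix `M ⊗ I` acting on the coordinate `k`, written on the full multi-index: row `i`
of `spreadAt k M` is row `i` of `M`, placed in the column block `i k`. -/
def spreadAt (k : ι) (M : Matrix (∀ j, β j) γ ℝ) : Matrix (∀ j, β j) (β k × γ) ℝ :=
  of fun i c => if i k = c.1 then M i c.2 else 0

def IgnoresCoord [DecidableEq ι] (k : ι) (M : Matrix (∀ j, β j) γ ℝ) : Prop :=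
  ∀ i (x : β k), M (update i k x) = M i

theorem spreadAt_mul_apply (k : ι) (M : Matrix (∀ j, β j) γ ℝ) (X : Matrix (β k × γ) γ' ℝ)
    (i : ∀ j, β j) (c : γ') : (spreadAt k M * X) i c = ∑ b, M i b * X (i k, b) c := by
  simp [spreadAt, mul_apply, Fintype.sum_prod_type, ite_mul]

theorem spreadAt_mulVec_apply (k : ι) (M : Matrix (∀ j, β j) γ ℝ) (v : β k × γ → ℝ)
    (i : ∀ j, β j) : (spreadAt k M *ᵥ v) i = ∑ b, M i b * v (i k, b) := by
  simp [spreadAt, mulVec, dotProduct, Fintype.sum_prod_type, ite_mul]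

theorem spreadAt_mul (k : ι) (M : Matrix (∀ j, β j) γ ℝ) (Q : Matrix γ γ' ℝ) :
    spreadAt k (M * Q) = spreadAt k M * ((1 : Matrix (β k) (β k) ℝ) ⊗ₖ Q) := by
  ext i c
  rw [spreadAt_mul_apply]
  simp [spreadAt, mul_apply, one_apply]

variable [DecidableEq ι]

theorem spreadAt_mulVec_injective {k : ι} {M : Matrix (∀ j, β j) γ ℝ} (hM : IgnoresCoord k M)
    (hinj : Injective M.mulVec) : Injective (spreadAt k M).mulVec := by
  intro v w hvw
  funext ⟨x, b⟩
  suffices (fun b => v (x, b)) = fun b => w (x, b) from congrFun this b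
  refine hinj (funext fun i => ?_)
  have := congrFun hvw (update i k x)
  rwa [spreadAt_mulVec_apply, spreadAt_mulVec_apply, update_self, hM] at this

theorem kronecker_mul_eq_of_spreadAt_mul_eq [Fintype γ'] [DecidableEq γ'] {k : ι}
    {MT MU : Matrix (∀ j, β j) γ ℝ} {XT XU : Matrix (β k × γ) γ' ℝ} {Q : Matrix γ γ ℝ}
    {Q' : Matrix γ' γ' ℝ} (hU : IgnoresCoord k MU) (hinj : Injective MU.mulVec)
    (hM : MT = MU * Q) (hN : spreadAt k MT * XT = spreadAt k MU * XU * Q') :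
    ((1 : Matrix (β k) (β k) ℝ) ⊗ₖ Q) * XT = XU * Q' := by
  apply mul_left_cancel_of_mulVec_injective (spreadAt_mulVec_injective hU hinj)
  rw [← Matrix.mul_assoc, ← spreadAt_mul, ← hM, hN, Matrix.mul_assoc]

end SpreadAt

abbrev MultiIndex {d : ℕ} (n : Fin d → ℕ) : Type := ∀ s : Fin d, Fin (n s)

abbrev Cores {d : ℕ} (n : Fin d → ℕ) (ρ : Fin (d + 1) → ℕ) : Type :=
  ∀ s : Fin d, Fin (ρ s.castSucc) → Fin (n s) → Fin (ρ s.succ) → ℝ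

section Interfaces

variable {d : ℕ} {n : Fin d → ℕ} {ρ : Fin (d + 1) → ℕ} (G : Cores n ρ)

/-! Rows of the interface matrices are indexed by the full multi-index, although
`leftInterface G k` only depends on the coordinates before `k` and `rightInterface G k` on the
others. `rightInterface G k` is the transpose of the usual right interface matrix. -/

noncomputable def leftInterface : ∀ k : Fin (d + 1), Matrix (MultiIndex n) (Fin (ρ k)) ℝ :=
  Fin.induction (of fun _ _ => 1) fun s L => spreadAt s L * leftUnf (G s)

noncomputable def rightInterface : ∀ k : Fin (d + 1), Matrix (MultiIndex n) (Fin (ρ k)) ℝ :=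
  Fin.reverseInduction (of fun _ _ => 1) fun s R => spreadAt s R * (rightUnf (G s))ᵀ

theorem leftInterface_zero : leftInterface G 0 = of fun _ _ => 1 := rfl

theorem leftInterface_succ (s : Fin d) :
    leftInterface G s.succ = spreadAt s (leftInterface G s.castSucc) * leftUnf (G s) :=
  Fin.induction_succ _ _ s

theorem rightInterface_last : rightInterface G (Fin.last d) = of fun _ _ => 1 :=
  Fin.reverseInduction_last

theorem rightInterface_castSucc (s : Fin d) :
    rightInterface G s.castSucc = spreadAt s (rightInterface G s.succ) * (rightUnf (G s))ᵀ :=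
  Fin.reverseInduction_castSucc s

theorem leftInterface_succ_apply (s : Fin d) (i : MultiIndex n) (a : Fin (ρ s.succ)) :
    leftInterface G s.succ i a = ∑ b, leftInterface G s.castSucc i b * G s b (i s) a := by
  rw [leftInterface_succ, spreadAt_mul_apply]
  rfl

theorem rightInterface_castSucc_apply (s : Fin d) (i : MultiIndex n) (a : Fin (ρ s.castSucc)) :
    rightInterface G s.castSucc i a = ∑ b, rightInterface G s.succ i b * G s a (i s) b := by
  rw [rightInterface_castSucc, spreadAt_mul_apply]
  rfl

theorem leftInterface_congr (k : Fin (d + 1)) {i i' : MultiIndex n}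
    (h : ∀ j : Fin d, j.castSucc < k → i j = i' j) :
    leftInterface G k i = leftInterface G k i' := by
  induction k using Fin.induction with
  | zero => rfl
  | succ s ih =>
    funext a
    simp only [leftInterface_succ_apply, h s Fin.castSucc_lt_succ,
      ih fun j hj => h j (hj.trans Fin.castSucc_lt_succ)]

theorem rightInterface_congr (k : Fin (d + 1)) {i i' : MultiIndex n}
    (h : ∀ j : Fin d, k ≤ j.castSucc → i j = i' j) :
    rightInterface G k i = rightInterface G k i' := by
  induction k using Fin.reverseInduction with
  | last => rw [rightInterface_last]; rfl
  | cast s ih =>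
    funext a
    simp only [rightInterface_castSucc_apply, h s le_rfl,
      ih fun j hj => h j (Fin.castSucc_lt_succ.le.trans hj)]

theorem leftInterface_ignoresCoord (s : Fin d) : IgnoresCoord s (leftInterface G s.castSucc) :=
  fun _ _ => leftInterface_congr G _ fun _ hj =>
    update_of_ne (Fin.castSucc_lt_castSucc_iff.mp hj).ne _ _

theorem rightInterface_ignoresCoord (s : Fin d) : IgnoresCoord s (rightInterface G s.succ) :=
  fun _ _ => rightInterface_congr G _ fun _ hj =>
    update_of_ne (Fin.succ_le_castSucc_iff.mp hj).ne' _ _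

end Interfaces

section Contraction

theorem rightInterface_succ_eq_tail {d : ℕ} {n : Fin (d + 1) → ℕ} {ρ : Fin (d + 2) → ℕ}
    (G : Cores n ρ) (k : Fin (d + 1)) (i : MultiIndex n) :
    rightInterface G k.succ i =
      rightInterface (n := fun s => n s.succ) (ρ := fun k => ρ k.succ) (fun s => G s.succ) k
        (Fin.tail i) := by
  induction k using Fin.reverseInduction with
  | last =>
    show rightInterface G (Fin.last (d + 1)) i = _
    rw [rightInterface_last, rightInterface_last]
    rfl
  | cast s ih =>
    funext a
    show rightInterface G s.succ.castSucc i a = _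
    rw [rightInterface_castSucc_apply, rightInterface_castSucc_apply, ih]
    rfl

theorem rightInterface_zero_apply {d : ℕ} {n : Fin d → ℕ} {ρ : Fin (d + 1) → ℕ}
    (G : Cores n ρ) (i : MultiIndex n) (a : Fin (ρ 0)) :
    rightInterface G 0 i a = ∑ α : (∀ s : Fin d, Fin (ρ s.succ)),
      ∏ s, G s ((Fin.cons a α : ∀ k, Fin (ρ k)) s.castSucc) (i s) (α s) := by
  induction d with
  | zero =>
    show rightInterface G (Fin.last 0) i a = _
    rw [rightInterface_last]
    simp
  | succ d ih =>
    refine (rightInterface_castSucc_apply G 0 i a).trans ?_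
    rw [← (Fin.consEquiv fun s : Fin (d + 1) => Fin (ρ s.succ)).sum_comp,
      Fintype.sum_prod_type]
    refine Finset.sum_congr rfl fun b _ => ?_
    rw [rightInterface_succ_eq_tail, ih, Finset.sum_mul]
    refine Finset.sum_congr rfl fun α _ => ?_
    rw [Fin.prod_univ_succ, mul_comm]
    rfl

variable {d : ℕ} {n : Fin d → ℕ} {ρ : Fin (d + 1) → ℕ}

theorem ttEval_eq_sum_rightInterface (G : Cores n ρ) (i : MultiIndex n) :
    ttEval n ρ G i = ∑ a, rightInterface G 0 i a := by
  simp only [rightInterface_zero_apply, ttEval]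
  rw [← (Fin.consEquiv fun k => Fin (ρ k)).sum_comp, Fintype.sum_prod_type]
  rfl

theorem sum_leftInterface_mul_rightInterface (G : Cores n ρ) (k : Fin (d + 1))
    (i : MultiIndex n) :
    ∑ a, leftInterface G k i a * rightInterface G k i a = ttEval n ρ G i := by
  induction k using Fin.induction with
  | zero => simp [leftInterface_zero, ttEval_eq_sum_rightInterface]
  | succ s ih =>
    rw [← ih]
    simp only [leftInterface_succ_apply, rightInterface_castSucc_apply, Finset.sum_mul,
      Finset.mul_sum]
    rw [Finset.sum_comm]
    exact Finset.sum_congr rfl fun _ _ => Finset.sum_congr rfl fun _ _ => by ring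

theorem leftInterface_mul_transpose_rightInterface (G : Cores n ρ) (k : Fin (d + 1)) :
    leftInterface G k * (rightInterface G k)ᵀ =
      of fun i i' => ttEval n ρ G fun j => if j.castSucc < k then i j else i' j := by
  ext i i'
  rw [of_apply, ← sum_leftInterface_mul_rightInterface, mul_apply]
  simp only [transpose_apply]
  rw [leftInterface_congr G k fun j hj => (if_pos hj).symm,
    rightInterface_congr G k fun j hj => (if_neg (not_lt.mpr hj)).symm]

theorem leftInterface_mul_eq_of_ttEval_eq {G H : Cores n ρ}
    (h : ttEval n ρ G = ttEval n ρ H) (k : Fin (d + 1)) :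
    leftInterface G k * (rightInterface G k)ᵀ = leftInterface H k * (rightInterface H k)ᵀ := by
  simp only [leftInterface_mul_transpose_rightInterface, h]

end Contraction

section Minimal

variable {d : ℕ} {n : Fin d → ℕ} {ρ : Fin (d + 1) → ℕ} {G : Cores n ρ}

theorem pos_of_minimalTT (hG : MinimalTT G) (hρ0 : ρ 0 = 1) (s : Fin d) : 0 < n s := by
  have hle (s : Fin d) : ρ s.castSucc ≤ n s * ρ s.succ := by
    have := rank_le_card_width (rightUnf (G s))
    rwa [(hG s).2, Fintype.card_prod, Fintype.card_fin, Fintype.card_fin] at this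
  have hρ (k : Fin (d + 1)) : 0 < ρ k := by
    induction k using Fin.induction with
    | zero => omega
    | succ s ih => exact pos_of_mul_pos_right (ih.trans_le (hle s)) (Nat.zero_le _)
  exact pos_of_mul_pos_left ((hρ _).trans_le (hle s)) (Nat.zero_le _)

theorem leftInterface_mulVec_injective (hG : MinimalTT G) (hρ0 : ρ 0 = 1) (k : Fin (d + 1)) :
    Injective (leftInterface G k).mulVec := by
  have : Nonempty (MultiIndex n) := ⟨fun s => ⟨0, pos_of_minimalTT hG hρ0 s⟩⟩
  induction k using Fin.induction with
  | zero =>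
    have : Subsingleton (Fin (ρ 0)) := by rw [hρ0]; infer_instance
    exact ones_mulVec_injective
  | succ s ih =>
    rw [leftInterface_succ]
    exact mulVec_injective_mul (spreadAt_mulVec_injective (leftInterface_ignoresCoord G s) ih)
      (mulVec_injective_of_rank_eq (by rw [(hG s).1, Fintype.card_fin]))

theorem rightInterface_mulVec_injective (hG : MinimalTT G) (hρ0 : ρ 0 = 1)
    (hρd : ρ (Fin.last d) = 1) (k : Fin (d + 1)) : Injective (rightInterface G k).mulVec := by
  have : Nonempty (MultiIndex n) := ⟨fun s => ⟨0, pos_of_minimalTT hG hρ0 s⟩⟩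
  induction k using Fin.reverseInduction with
  | last =>
    have : Subsingleton (Fin (ρ (Fin.last d))) := by rw [hρd]; infer_instance
    rw [rightInterface_last]
    exact ones_mulVec_injective
  | cast s ih =>
    rw [rightInterface_castSucc]
    exact mulVec_injective_mul (spreadAt_mulVec_injective (rightInterface_ignoresCoord G s) ih)
      (mulVec_injective_of_rank_eq (by rw [rank_transpose, (hG s).2, Fintype.card_fin]))

end Minimal

section Gauge

variable {d : ℕ} {n : Fin d → ℕ} {ρ : Fin (d + 1) → ℕ}

theorem leftGauge_orthogonal {T U : Cores n ρ}
    (hU : ∀ k, Injective (leftInterface U k).mulVec)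
    (hgauge : ∀ k, ∃ Q : Matrix (Fin (ρ k)) (Fin (ρ k)) ℝ,
      leftInterface T k = leftInterface U k * Q)
    (k : Fin (d + 1)) (horth : ∀ j : Fin d, j.castSucc < k → LeftOrth (T j) ∧ LeftOrth (U j))
    {Q : Matrix (Fin (ρ k)) (Fin (ρ k)) ℝ} (hQ : leftInterface T k = leftInterface U k * Q) :
    Qᵀ * Q = 1 := by
  induction k using Fin.induction with
  | zero =>
    have : Q = 1 := (mul_left_cancel_of_mulVec_injective (hU 0)
      (by rw [← hQ, Matrix.mul_one]; rfl)).symm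
    rw [this, transpose_one, Matrix.mul_one]
  | succ s ih =>
    obtain ⟨Q₀, hQ₀⟩ := hgauge s.castSucc
    obtain ⟨hTs, hUs⟩ := horth s Fin.castSucc_lt_succ
    refine transpose_mul_self_eq_one_of_kronecker_mul_eq
      (kronecker_mul_eq_of_spreadAt_mul_eq (leftInterface_ignoresCoord U s) (hU _) hQ₀ ?_)
      (ih (fun j hj => horth j (hj.trans Fin.castSucc_lt_succ)) hQ₀) hTs hUs
    rw [← leftInterface_succ, ← leftInterface_succ, hQ]

theorem rightGauge_orthogonal {T V : Cores n ρ}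
    (hV : ∀ k, Injective (rightInterface V k).mulVec)
    (hgauge : ∀ k, ∃ Q : Matrix (Fin (ρ k)) (Fin (ρ k)) ℝ,
      rightInterface T k = rightInterface V k * Q)
    (k : Fin (d + 1)) (horth : ∀ j : Fin d, k ≤ j.castSucc → RightOrth (T j) ∧ RightOrth (V j))
    {Q : Matrix (Fin (ρ k)) (Fin (ρ k)) ℝ} (hQ : rightInterface T k = rightInterface V k * Q) :
    Qᵀ * Q = 1 := by
  induction k using Fin.reverseInduction with
  | last =>
    have : Q = 1 := (mul_left_cancel_of_mulVec_injective (hV _)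
      (by rw [← hQ, Matrix.mul_one, rightInterface_last, rightInterface_last])).symm
    rw [this, transpose_one, Matrix.mul_one]
  | cast s ih =>
    obtain ⟨Q₁, hQ₁⟩ := hgauge s.succ
    obtain ⟨hTs, hVs⟩ := horth s le_rfl
    refine transpose_mul_self_eq_one_of_kronecker_mul_eq
      (kronecker_mul_eq_of_spreadAt_mul_eq (rightInterface_ignoresCoord V s) (hV _) hQ₁ ?_)
      (ih (fun j hj => horth j (Fin.castSucc_lt_succ.le.trans hj)) hQ₁)
      (by rw [transpose_transpose]; exact hTs) (by rw [transpose_transpose]; exact hVs)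
    rw [← rightInterface_castSucc, ← rightInterface_castSucc, hQ]

variable {ν : ∀ p q : ℕ, Matrix (Fin p) (Fin q) ℝ → ℝ}

theorem muLeft_eq_of_leftOrth (hν : UnitarilyInvariant ν) {T U : Cores n ρ}
    (hTU : ttEval n ρ T = ttEval n ρ U) (hT : MinimalTT T) (hU : MinimalTT U)
    (hρ0 : ρ 0 = 1) (hρd : ρ (Fin.last d) = 1) (s : Fin d)
    (horth : ∀ j < s, LeftOrth (T j) ∧ LeftOrth (U j)) :
    muLeft ν (T s) = muLeft ν (U s) := by
  have hgauge (k : Fin (d + 1)) :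
      ∃ Q : Matrix (Fin (ρ k)) (Fin (ρ k)) ℝ, leftInterface T k = leftInterface U k * Q :=
    exists_eq_mul_of_mul_transpose_eq (leftInterface_mul_eq_of_ttEval_eq hTU k)
      (rightInterface_mulVec_injective hT hρ0 hρd k)
  have hUinj := leftInterface_mulVec_injective hU hρ0
  obtain ⟨Q₀, hQ₀⟩ := hgauge s.castSucc
  obtain ⟨Q₁, hQ₁⟩ := hgauge s.succ
  have hQ₀orth := leftGauge_orthogonal hUinj hgauge s.castSucc
    (fun j hj => horth j (Fin.castSucc_lt_castSucc_iff.mp hj)) hQ₀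
  have hQ₁surj : Surjective Q₁.mulVec :=
    mulVec_surjective_of_mul (hQ₁ ▸ leftInterface_mulVec_injective hT hρ0 s.succ)
  have hstep := kronecker_mul_eq_of_spreadAt_mul_eq (k := s) (MT := leftInterface T s.castSucc)
    (XT := leftUnf (T s)) (XU := leftUnf (U s)) (leftInterface_ignoresCoord U s) (hUinj _) hQ₀
    (by rw [← leftInterface_succ, ← leftInterface_succ, hQ₁])
  exact blockCoh_colSpace_eq_of_kronecker_mul_eq hν hstep hQ₀orth hQ₁surj

theorem muRight_eq_of_rightOrth (hν : UnitarilyInvariant ν) {T V : Cores n ρ}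
    (hTV : ttEval n ρ T = ttEval n ρ V) (hT : MinimalTT T) (hV : MinimalTT V)
    (hρ0 : ρ 0 = 1) (hρd : ρ (Fin.last d) = 1) (s : Fin d)
    (horth : ∀ j > s, RightOrth (T j) ∧ RightOrth (V j)) :
    muRight ν (T s) = muRight ν (V s) := by
  have hgauge (k : Fin (d + 1)) :
      ∃ Q : Matrix (Fin (ρ k)) (Fin (ρ k)) ℝ, rightInterface T k = rightInterface V k * Q := by
    refine exists_eq_mul_of_mul_transpose_eq (R' := leftInterface V k) ?_
      (leftInterface_mulVec_injective hT hρ0 k)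
    simpa only [transpose_mul, transpose_transpose] using
      congrArg transpose (leftInterface_mul_eq_of_ttEval_eq hTV k)
  have hVinj := rightInterface_mulVec_injective hV hρ0 hρd
  obtain ⟨Q₀, hQ₀⟩ := hgauge s.castSucc
  obtain ⟨Q₁, hQ₁⟩ := hgauge s.succ
  have hQ₁orth := rightGauge_orthogonal hVinj hgauge s.succ
    (fun j hj => horth j (Fin.succ_le_castSucc_iff.mp hj)) hQ₁
  have hQ₀surj : Surjective Q₀.mulVec :=
    mulVec_surjective_of_mul (hQ₀ ▸ rightInterface_mulVec_injective hT hρ0 hρd s.castSucc)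
  have hstep := kronecker_mul_eq_of_spreadAt_mul_eq (k := s) (MT := rightInterface T s.succ)
    (XT := (rightUnf (T s))ᵀ) (XU := (rightUnf (V s))ᵀ) (rightInterface_ignoresCoord V s)
    (hVinj _) hQ₁ (by rw [← rightInterface_castSucc, ← rightInterface_castSucc, hQ₀])
  exact blockCoh_colSpace_eq_of_kronecker_mul_eq hν hstep hQ₁orth hQ₀surj

end Gauge

theorem tt_core_coherence_invariant_general
    (ν : ∀ p q : ℕ, Matrix (Fin p) (Fin q) ℝ → ℝ)
    (hinv : ∀ p q (A : Matrix (Fin p) (Fin q) ℝ)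
      (P : Matrix (Fin p) (Fin p) ℝ) (Q : Matrix (Fin q) (Fin q) ℝ),
      Pᵀ * P = 1 → P * Pᵀ = 1 → Qᵀ * Q = 1 → Q * Qᵀ = 1 →
      ν p q (P * A * Q) = ν p q A)
    (d : ℕ) (n : Fin d → ℕ) (ρ : Fin (d + 1) → ℕ)
    (hρ0 : ρ 0 = 1) (hρd : ρ (Fin.last d) = 1)
    (A : (∀ s : Fin d, Fin (n s)) → ℝ)
    (U V T : ∀ s : Fin d, Fin (ρ s.castSucc) → Fin (n s) → Fin (ρ s.succ) → ℝ)
    (t : ℕ)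
    (hUA : ttEval n ρ U = A) (hVA : ttEval n ρ V = A) (hTA : ttEval n ρ T = A)
    (hUmin : MinimalTT U) (hVmin : MinimalTT V) (hTmin : MinimalTT T)
    (hUorth : TOrth d U) (hVorth : TOrth 1 V) (hTorth : TOrth t T) :
    (∀ s : Fin d, s.val + 1 ≤ min t (d - 1) → muLeft ν (T s) = muLeft ν (U s)) ∧
    (∀ s : Fin d, max 2 t ≤ s.val + 1 → muRight ν (T s) = muRight ν (V s)) := by
  constructor
  · intro s hs
    refine muLeft_eq_of_leftOrth hinv (hTA.trans hUA.symm) hTmin hUmin hρ0 hρd s fun j hj => ?_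
    have hj : j.val < s.val := hj
    exact ⟨hTorth.1 j (by omega), hUorth.1 j (by omega)⟩
  · intro s hs
    refine muRight_eq_of_rightOrth hinv (hTA.trans hVA.symm) hTmin hVmin hρ0 hρd s fun j hj => ?_
    have hj : s.val < j.val := hj
    exact ⟨hTorth.2 j (by omega), hVorth.2 j (by omega)⟩

/-- Invariance of TT core coherences: for a unitarily invariant matrix norm `‖·‖_u` and
minimal TT factorizations of the same tensor — a left-orthogonal `{U_s}`, a right-orthogonal
`{V_s}` and a `t`-orthogonal `{T_s}` — one has `μ_{u,<}(T_s) = μ_{u,<}(U_s)` for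
`s = 1,…,min{t,d−1}` and `μ_{u,>}(T_s) = μ_{u,>}(V_s)` for `s = max{2,t},…,d`. -/
theorem tt_core_coherence_invariant
    (ν : ∀ p q : ℕ, Matrix (Fin p) (Fin q) ℝ → ℝ)
    (hnonneg : ∀ p q (A : Matrix (Fin p) (Fin q) ℝ), 0 ≤ ν p q A)
    (hinv : ∀ p q (A : Matrix (Fin p) (Fin q) ℝ)
      (P : Matrix (Fin p) (Fin p) ℝ) (Q : Matrix (Fin q) (Fin q) ℝ),
      Pᵀ * P = 1 → P * Pᵀ = 1 → Qᵀ * Q = 1 → Q * Qᵀ = 1 →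
      ν p q (P * A * Q) = ν p q A)
    (d : ℕ) (hd : 2 ≤ d) (n : Fin d → ℕ) (ρ : Fin (d + 1) → ℕ)
    (hρ0 : ρ 0 = 1) (hρd : ρ (Fin.last d) = 1)
    (A : (∀ s : Fin d, Fin (n s)) → ℝ)
    (U V T : ∀ s : Fin d, Fin (ρ s.castSucc) → Fin (n s) → Fin (ρ s.succ) → ℝ)
    (t : ℕ) (ht1 : 1 ≤ t) (htd : t ≤ d)
    (hUA : ttEval n ρ U = A) (hVA : ttEval n ρ V = A) (hTA : ttEval n ρ T = A)
    (hUmin : MinimalTT U) (hVmin : MinimalTT V) (hTmin : MinimalTT T)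
    (hUorth : TOrth d U) (hVorth : TOrth 1 V) (hTorth : TOrth t T) :
    (∀ s : Fin d, s.val + 1 ≤ min t (d - 1) → muLeft ν (T s) = muLeft ν (U s)) ∧
    (∀ s : Fin d, max 2 t ≤ s.val + 1 → muRight ν (T s) = muRight ν (V s)) :=
  tt_core_coherence_invariant_general ν hinv d n ρ hρ0 hρd A U V T t hUA hVA hTA hUmin hVmin hTmin
    hUorth hVorth hTorth

end TT
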